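/- Let L and M be admissible lists (every entry ≥ 2). If d'(L) · d(M) = d'(M) · d(L), then L = M. (Equivalently: an admissible chain T is uniquely recovered from the rational number e(T) = d'(T)/d(T), via the continued fraction expansion e(T) = (a_1 − e(T − T_1))^{−1}.) -/
import Mathlib


/-- The discriminant `d(L)` of a chain with weight list `L`, defined by the recursion
`d([]) = 1`, `d([a]) = a`, `d(a :: b :: L') = a * d(b :: L') - d(L')`. -/
def disc : List ℤ → ℤ
  | [] => 1
  | [a] => a
  | a :: b :: L => a * disc (b :: L) - disc L

/-- `d'(L) = d(L.tail)` for nonempty `L`, and `d'([]) = 0`. -/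
def disc' : List ℤ → ℤ
  | [] => 0
  | _ :: L => disc L

lemma disc_cons (a : ℤ) (L : List ℤ) : disc (a :: L) = a * disc L - disc' L := by
  cases L <;> simp [disc, disc']

lemma disc_pos_bounds (L : List ℤ) (hL : ∀ a ∈ L, 2 ≤ a) :
    0 < disc L ∧ disc' L < disc L ∧ 0 ≤ disc' L := by
  induction L with
  | nil => simp [disc, disc']
  | cons a L ih =>
    have ha : 2 ≤ a := hL a (by simp)
    obtain ⟨h1, h2, h3⟩ := ih (fun b hb => hL b (by simp [hb]))
    have key : disc (a :: L) = a * disc L - disc' L := disc_cons a L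
    have : disc L < disc (a :: L) := by nlinarith
    refine ⟨by linarith, ?_, ?_⟩
    · simpa [disc'] using this
    · simp only [disc']; linarith

theorem chain_determined_by_e (L M : List ℤ) (hL : ∀ a ∈ L, 2 ≤ a)
    (hM : ∀ a ∈ M, 2 ≤ a) (h : disc' L * disc M = disc' M * disc L) :
    L = M := by
  induction L generalizing M with
  | nil =>
    cases M with
    | nil => rfl
    | cons b M' =>
      exfalso
      obtain ⟨h1, _, _⟩ := disc_pos_bounds M' (fun x hx => hM x (by simp [hx]))
      simp [disc, disc'] at h
      omega
  | cons a L' ih =>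
    cases M with
    | nil =>
      exfalso
      obtain ⟨h1, _, _⟩ := disc_pos_bounds L' (fun x hx => hL x (by simp [hx]))
      simp [disc, disc'] at h
      omega
    | cons b M' =>
      have hL' : ∀ x ∈ L', 2 ≤ x := fun x hx => hL x (by simp [hx])
      have hM' : ∀ x ∈ M', 2 ≤ x := fun x hx => hM x (by simp [hx])
      have ha : 2 ≤ a := hL a (by simp)
      have hb : 2 ≤ b := hM b (by simp)
      obtain ⟨pL, ltL, nnL⟩ := disc_pos_bounds L' hL'
      obtain ⟨pM, ltM, nnM⟩ := disc_pos_bounds M' hM'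
      have h' : disc L' * disc (b :: M') = disc M' * disc (a :: L') := by
        simpa [disc'] using h
      rw [disc_cons, disc_cons] at h'
      have hh1 : a ≤ b := by
        nlinarith [mul_pos pL pM, mul_lt_mul_of_pos_left ltL pM,
          mul_nonneg pL.le nnM]
      have hh2 : b ≤ a := by
        nlinarith [mul_pos pL pM, mul_lt_mul_of_pos_left ltM pL,
          mul_nonneg pM.le nnL]
      have hab : a = b := le_antisymm hh1 hh2
      subst hab
      have hLM : disc' L' * disc M' = disc' M' * disc L' := by nlinarith
      rw [ih M' hL' hM' hLM]
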